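/- For every k ∈ [0,1] and every α ∈ ℝ, one has the identity 108 + 216(1-k) - 144√3·√(k - k²)·cos α - 216√(1-k)·sin α - 72(1-k)·cos²α + 36(1-k)·sin²α = 36·[(3√(1-k)·sin α - 1)² + (√(2k) - √(6(1-k))·cos α)²]; in particular this expression is nonnegative, and for α ∈ [0, π/2] it vanishes exactly when k = 2/3, sin α = √(1/3) and cos α = √(2/3). -/

import Mathlib

/-- The boundary value `d(3^{-1/3}, k, α)` of the rescaled lower-bound function for
the tangential Hessian at the blow-up of the critical point. -/
noncomputable def dBoundary (k α : ℝ) : ℝ :=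
  108 + 216 * (1 - k) - 144 * Real.sqrt 3 * Real.sqrt (k - k ^ 2) * Real.cos α
    - 216 * Real.sqrt (1 - k) * Real.sin α
    - 72 * (1 - k) * Real.cos α ^ 2 + 36 * (1 - k) * Real.sin α ^ 2

/-!
Writing `u = √(1 - k)` and `v = √k`, all radicals become polynomial in `u`, `v`, `sin α`, `cos α`
(`√(k - k²) = u v`, `√(2k) = √2 v`, `√(6(1 - k)) = √6 u`), and the identity is a polynomial one
modulo `u² + v² = 1` and `sin² α + cos² α = 1`. On the zero set both squares vanish:
`9(1 - k) sin² α = 1` and `2k = 6(1 - k) cos² α`; adding them with weights `1` and `3/2`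
eliminates `α` and forces `k = 2/3`.
-/

open Real

theorem sqrt_two_mul_mul_sqrt_six_mul {x : ℝ} (hx : 0 ≤ x) (y : ℝ) :
    √(2 * x) * √(6 * y) = 2 * √3 * √(x * y) := by
  rw [← sqrt_mul (by positivity), show 2 * x * (6 * y) = 2 ^ 2 * 3 * (x * y) by ring,
    sqrt_mul (by positivity), sqrt_mul (by positivity), sqrt_sq zero_le_two]

theorem dBoundary_eq_sum_sq {k : ℝ} (hk0 : 0 ≤ k) (hk1 : k ≤ 1) (α : ℝ) :
    dBoundary k α =
      36 * ((3 * √(1 - k) * sin α - 1) ^ 2 + (√(2 * k) - √(6 * (1 - k)) * cos α) ^ 2) := by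
  have hmixed : √(2 * k) * √(6 * (1 - k)) = 2 * √3 * √(k - k ^ 2) := by
    rw [sqrt_two_mul_mul_sqrt_six_mul hk0]
    ring_nf
  unfold dBoundary
  linear_combination 72 * cos α * hmixed - 324 * sin α ^ 2 * sq_sqrt (sub_nonneg.2 hk1)
    - 36 * sq_sqrt (by positivity : 0 ≤ 2 * k)
    - 36 * cos α ^ 2 * sq_sqrt (by linarith : 0 ≤ 6 * (1 - k))
    - 288 * (1 - k) * sin_sq_add_cos_sq α

theorem eq_two_thirds_of_dBoundary_eq_zero {k α : ℝ} (hk0 : 0 ≤ k) (hk1 : k ≤ 1)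
    (h : dBoundary k α = 0) : k = 2 / 3 ∧ sin α ^ 2 = 1 / 3 ∧ cos α ^ 2 = 2 / 3 := by
  rw [dBoundary_eq_sum_sq hk0 hk1, mul_eq_zero, or_iff_right (by norm_num),
    add_eq_zero_iff_of_nonneg (sq_nonneg _) (sq_nonneg _), sq_eq_zero_iff, sq_eq_zero_iff] at h
  obtain ⟨hsin, hcos⟩ := h
  have hsin_sq : 9 * (1 - k) * sin α ^ 2 = 1 := by
    linear_combination (3 * √(1 - k) * sin α + 1) * hsin
      - 9 * sin α ^ 2 * sq_sqrt (sub_nonneg.2 hk1)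
  have hcos_sq : 2 * k = 6 * (1 - k) * cos α ^ 2 := by
    linear_combination (√(2 * k) + √(6 * (1 - k)) * cos α) * hcos
      - sq_sqrt (by positivity : 0 ≤ 2 * k)
      + cos α ^ 2 * sq_sqrt (by linarith : 0 ≤ 6 * (1 - k))
  have hk : k = 2 / 3 := by
    linear_combination -hsin_sq / 12 + hcos_sq / 8 + 3 / 4 * (1 - k) * sin_sq_add_cos_sq α
  subst hk
  exact ⟨rfl, by linear_combination hsin_sq / 3, by linear_combination -hcos_sq / 2⟩

theorem dBoundary_two_thirds_eq_zero {α : ℝ} (hsin : sin α = √(1 / 3))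
    (hcos : cos α = √(2 / 3)) : dBoundary (2 / 3) α = 0 := by
  rw [dBoundary_eq_sum_sq (by norm_num) (by norm_num), hsin, hcos,
    show (1 : ℝ) - 2 / 3 = 1 / 3 by norm_num, mul_assoc, mul_self_sqrt (by norm_num),
    ← sqrt_mul (by norm_num)]
  norm_num

/-- For every `k ∈ [0,1]` and `α ∈ ℝ`, `d(3^{-1/3}, k, α)` equals
`36[(3√(1-k)·sin α - 1)² + (√(2k) - √(6(1-k))·cos α)²]`; in particular it is
nonnegative, and for `α ∈ [0, π/2]` it vanishes exactly when `k = 2/3`,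
`sin α = √(1/3)` and `cos α = √(2/3)`. -/
theorem boundary_value_sum_of_squares (k : ℝ) (hk : k ∈ Set.Icc (0:ℝ) 1) (α : ℝ) :
    dBoundary k α =
      36 * ((3 * Real.sqrt (1 - k) * Real.sin α - 1) ^ 2
        + (Real.sqrt (2 * k) - Real.sqrt (6 * (1 - k)) * Real.cos α) ^ 2) ∧
    0 ≤ dBoundary k α ∧
    (α ∈ Set.Icc (0:ℝ) (Real.pi / 2) →
      (dBoundary k α = 0 ↔
        k = 2/3 ∧ Real.sin α = Real.sqrt (1/3) ∧ Real.cos α = Real.sqrt (2/3))) := by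
  obtain ⟨hk0, hk1⟩ := hk
  have hsum := dBoundary_eq_sum_sq hk0 hk1 α
  refine ⟨hsum, hsum ▸ by positivity, fun ⟨hα0, hα2⟩ => ⟨fun h => ?_, ?_⟩⟩
  · have hsin : 0 ≤ sin α := sin_nonneg_of_nonneg_of_le_pi hα0 (by linarith [pi_pos])
    have hcos : 0 ≤ cos α := cos_nonneg_of_mem_Icc ⟨by linarith [pi_pos], hα2⟩
    obtain ⟨rfl, hsin_sq, hcos_sq⟩ := eq_two_thirds_of_dBoundary_eq_zero hk0 hk1 h
    exact ⟨rfl, by rw [← hsin_sq, sqrt_sq hsin], by rw [← hcos_sq, sqrt_sq hcos]⟩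
  · rintro ⟨rfl, hsin, hcos⟩
    exact dBoundary_two_thirds_eq_zero hsin hcos
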